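/- Let (X_1,Y_1), (X_2,Y_2), … be i.i.d. random elements of S^{d1} × S^{d2} and let K be a bounded measurable symmetric kernel on each sphere. Then the empirical distance covariance V_{n,X,Y} = (1/n²) Σ_{i,j} K(X_i,X_j)K(Y_i,Y_j) + (1/n⁴)(Σ_{i,j} K(X_i,X_j))(Σ_{i,j} K(Y_i,Y_j)) − (2/n³) Σ_{i,j,k} K(X_i,X_j)K(Y_i,Y_k) converges almost surely, as n → ∞, to the population distance covariance dCov²_K(X,Y) = E[K(X,X')K(Y,Y')] + E[K(X,X')]E[K(Y,Y')] − 2E[K(X,X')K(Y,Y'')]. -/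

import Mathlib

/-!
After normalisation by `n^r`, every sum in `V_n` is a V-statistic
`n^{-r} ∑_{t ∈ [n]^r} g(Z_{t 1}, …, Z_{t r})` of a bounded kernel `g` of degree `r ∈ {2, 3}` in the
i.i.d. pairs `Z_i = (X_i, Y_i)`, and `dCov²` is the same combination of the means `∫ g d(ν^{⊗r})`,
`ν` the law of `Z_0`; so it suffices to prove a strong law for such V-statistics. Tuples with a
repeated index number `O(n^{r-1})`, so only injective tuples matter. After centring `g`, two
injective tuples with disjoint ranges give independent mean-zero summands, hence the centred sum has
second moment `O(n^{2r-1})`. Along `n = k²` the second moments of the normalised sums are therefore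
summable, which forces almost sure convergence to `0`; since the sum moves by at most
`c (n^r - m^r)` between `m ≤ n`, the limit along squares extends to all `n`.
-/

open MeasureTheory ProbabilityTheory Filter Topology

noncomputable section

/-- The unit sphere `S^d = {x ∈ ℝ^{d+1} : ‖x‖ = 1}` with the Euclidean norm. -/
abbrev UnitSphere (d : ℕ) : Type :=
  Metric.sphere (0 : EuclideanSpace ℝ (Fin (d + 1))) 1

/-- The empirical distance covariance `V_{n,X,Y}`. -/
def Vstat {α β : Type*} (K1 : α → α → ℝ) (K2 : β → β → ℝ)
    (n : ℕ) (x : Fin n → α) (y : Fin n → β) : ℝ :=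
  (1 / (n : ℝ) ^ 2) * ∑ i, ∑ j, K1 (x i) (x j) * K2 (y i) (y j)
    + (1 / (n : ℝ) ^ 4) * (∑ i, ∑ j, K1 (x i) (x j)) * (∑ i, ∑ j, K2 (y i) (y j))
    - (2 / (n : ℝ) ^ 3) * ∑ i, ∑ j, ∑ k, K1 (x i) (x j) * K2 (y i) (y k)

/-- Kernel-induced population distance covariance, via the joint law `μ` of `(X,Y)`. -/
def dCov2 {α β : Type*} [MeasurableSpace α] [MeasurableSpace β]
    (K1 : α → α → ℝ) (K2 : β → β → ℝ) (μ : Measure (α × β)) : ℝ :=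
  (∫ p, (∫ q, K1 p.1 q.1 * K2 p.2 q.2 ∂μ) ∂μ)
    + (∫ p, (∫ q, K1 p.1 q.1 ∂μ) ∂μ) * (∫ p, (∫ q, K2 p.2 q.2 ∂μ) ∂μ)
    - 2 * ∫ p, (∫ q, (∫ r, K1 p.1 q.1 * K2 p.2 r.2 ∂μ) ∂μ) ∂μ

open Finset Function

def tuplesBelow (r n : ℕ) : Finset (Fin r → ℕ) := Fintype.piFinset fun _ => range n

def distinctTuplesBelow (r n : ℕ) : Finset (Fin r → ℕ) :=
  {t ∈ tuplesBelow r n | Injective t}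

@[simp] lemma mem_tuplesBelow {r n : ℕ} {t : Fin r → ℕ} :
    t ∈ tuplesBelow r n ↔ ∀ a, t a < n := by
  simp [tuplesBelow]

@[simp] lemma card_tuplesBelow (r n : ℕ) : #(tuplesBelow r n) = n ^ r := by
  simp [tuplesBelow]

lemma tuplesBelow_mono (r : ℕ) {m n : ℕ} (h : m ≤ n) : tuplesBelow r m ⊆ tuplesBelow r n :=
  Fintype.piFinset_subset _ _ fun _ => range_subset_range.2 h

lemma distinctTuplesBelow_mono (r : ℕ) {m n : ℕ} (h : m ≤ n) :
    distinctTuplesBelow r m ⊆ distinctTuplesBelow r n :=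
  filter_subset_filter _ (tuplesBelow_mono r h)

lemma distinctTuplesBelow_subset (r n : ℕ) : distinctTuplesBelow r n ⊆ tuplesBelow r n :=
  filter_subset _ _

lemma sum_tuplesBelow_zero {M : Type*} [AddCommMonoid M] (n : ℕ) (G : (Fin 0 → ℕ) → M) :
    ∑ t ∈ tuplesBelow 0 n, G t = G ![] := by
  simp [tuplesBelow, Subsingleton.elim _ ![]]

lemma sum_tuplesBelow_succ {M : Type*} [AddCommMonoid M] (r n : ℕ)
    (G : (Fin (r + 1) → ℕ) → M) :
    ∑ t ∈ tuplesBelow (r + 1) n, G t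
      = ∑ i ∈ range n, ∑ t ∈ tuplesBelow r n, G (Fin.cons i t) := by
  rw [← sum_product']
  refine sum_nbij' (fun t => (t 0, Fin.tail t)) (fun p => Fin.cons p.1 p.2) ?_ ?_ ?_ ?_ ?_
  all_goals simp [Fin.forall_fin_succ, Fin.tail]

lemma card_filter_apply_eq_apply_le {r n : ℕ} {a b : Fin r} (hab : a ≠ b) :
    #{t ∈ tuplesBelow r n | t a = t b} ≤ n ^ (r - 1) := by
  obtain ⟨r, rfl⟩ : ∃ r', r = r' + 1 := ⟨r - 1, by have := a.pos; omega⟩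
  obtain ⟨b, rfl⟩ := Fin.exists_succAbove_eq hab.symm
  calc #{t ∈ tuplesBelow (r + 1) n | t a = t (a.succAbove b)}
      ≤ #(tuplesBelow r n) := by
        refine card_le_card_of_injOn (Fin.removeNth a) (fun t ht => ?_) fun t ht s hs hts => ?_
        · simp only [coe_filter, Set.mem_ofPred_eq, mem_tuplesBelow] at ht
          simp [Fin.removeNth, ht.1 _]
        · simp only [coe_filter, Set.mem_ofPred_eq] at ht hs
          have hb := congrFun hts b
          simp only [Fin.removeNth_apply] at hb
          ext c
          rcases Fin.eq_self_or_eq_succAbove a c with rfl | ⟨c, rfl⟩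
          · rw [ht.2, hs.2, hb]
          · exact congrFun hts c
    _ = n ^ (r + 1 - 1) := by simp

lemma card_tuplesBelow_sdiff_distinct_le (r n : ℕ) :
    #(tuplesBelow r n \ distinctTuplesBelow r n) ≤ r ^ 2 * n ^ (r - 1) := by
  have hsub : tuplesBelow r n \ distinctTuplesBelow r n ⊆
      (univ : Finset (Fin r)).offDiag.biUnion fun p => {t ∈ tuplesBelow r n | t p.1 = t p.2} := by
    intro t ht
    simp only [distinctTuplesBelow, Finset.mem_sdiff, mem_filter, not_and] at ht
    obtain ⟨a, b, hab, hne⟩ := not_injective_iff.1 (ht.2 ht.1)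
    exact mem_biUnion.2 ⟨(a, b), by simpa using hne, mem_filter.2 ⟨ht.1, hab⟩⟩
  calc _ ≤ _ := card_le_card hsub
    _ ≤ #(univ : Finset (Fin r)).offDiag * n ^ (r - 1) :=
        card_biUnion_le_card_mul _ _ _ fun p hp =>
          card_filter_apply_eq_apply_le (mem_offDiag.1 hp).2.2
    _ ≤ r ^ 2 * n ^ (r - 1) := by
        gcongr
        simp only [offDiag_card, card_univ, Fintype.card_fin]
        exact (Nat.sub_le _ _).trans_eq (sq r).symm

-- Two injective tuples whose ranges meet concatenate to a non-injective tuple of length `r + r`.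
lemma card_filter_not_disjoint_le (r n : ℕ) :
    #{p ∈ distinctTuplesBelow r n ×ˢ distinctTuplesBelow r n |
        ¬ Disjoint (univ.image p.1) (univ.image p.2)} ≤ (r + r) ^ 2 * n ^ (r + r - 1) := by
  refine le_trans ?_ (card_tuplesBelow_sdiff_distinct_le (r + r) n)
  refine card_le_card_of_injOn (fun p => Fin.append p.1 p.2) (fun p hp => ?_)
    fun p _ q _ hpq => ?_
  · simp only [coe_filter, Set.mem_ofPred_eq, mem_product, distinctTuplesBelow, mem_filter,
      mem_tuplesBelow] at hp
    obtain ⟨⟨⟨h1, -⟩, h2, -⟩, hp⟩ := hp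
    obtain ⟨k, hk1, hk2⟩ := not_disjoint_iff.1 hp
    obtain ⟨a, -, rfl⟩ := mem_image.1 hk1
    obtain ⟨b, -, hb⟩ := mem_image.1 hk2
    simp only [coe_sdiff, distinctTuplesBelow, Set.mem_sdiff, mem_coe, mem_tuplesBelow,
      mem_filter, not_and]
    refine ⟨Fin.addCases (fun c => by rw [Fin.append_left]; exact h1 c)
      (fun c => by rw [Fin.append_right]; exact h2 c), fun _ hinj => ?_⟩
    have := @hinj (Fin.castAdd r a) (Fin.natAdd r b)
      (by rw [Fin.append_left, Fin.append_right, hb])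
    simp [Fin.ext_iff] at this
    omega
  · ext a
    · simpa only [Fin.append_left] using congrFun hpq (Fin.castAdd r a)
    · simpa only [Fin.append_right] using congrFun hpq (Fin.natAdd r a)

lemma abs_sum_le_card_mul {ι : Type*} (s : Finset ι) {f : ι → ℝ} {c : ℝ}
    (h : ∀ i, |f i| ≤ c) : |∑ i ∈ s, f i| ≤ #s * c :=
  (abs_sum_le_sum_abs _ _).trans <|
    (sum_le_sum fun i _ => h i).trans_eq (by rw [sum_const, nsmul_eq_mul])

lemma natCast_sq_mul_pow_sub_one_mul (m : ℕ) (x : ℝ) :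
    (m : ℝ) ^ 2 * x ^ (m - 1) * x = m ^ 2 * x ^ m := by
  cases m <;> simp [pow_succ, mul_assoc]

lemma Nat.tendsto_sqrt_atTop : Tendsto Nat.sqrt atTop atTop :=
  tendsto_atTop_atTop.2 fun b => ⟨b * b, fun _ hn => Nat.le_sqrt.2 hn⟩

lemma Nat.tendsto_sqrt_sq_div_self :
    Tendsto (fun n : ℕ => ((Nat.sqrt n ^ 2 : ℕ) : ℝ) / n) atTop (𝓝 1) := by
  have hlow : Tendsto (fun n : ℕ => ((Nat.sqrt n : ℝ) / (Nat.sqrt n + 1)) ^ 2) atTop (𝓝 1) := by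
    simpa using ((tendsto_natCast_div_add_atTop (1 : ℝ)).comp Nat.tendsto_sqrt_atTop).pow 2
  refine tendsto_of_tendsto_of_tendsto_of_le_of_le' hlow tendsto_const_nhds ?_ ?_
  · filter_upwards [eventually_gt_atTop 0] with n hn
    have hlt : (n : ℝ) < (Nat.sqrt n + 1) ^ 2 := by exact_mod_cast Nat.lt_succ_sqrt' n
    rw [div_pow, Nat.cast_pow]
    exact div_le_div_of_nonneg_left (by positivity) (by positivity) hlt.le
  · filter_upwards [eventually_gt_atTop 0] with n hn
    exact div_le_one_of_le₀ (by exact_mod_cast Nat.sqrt_le' n) n.cast_nonneg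

lemma tendsto_div_pow_of_tendsto_sq_subseq {u : ℕ → ℝ} {c : ℝ} {r : ℕ}
    (hu : ∀ m n, m ≤ n → |u n - u m| ≤ c * ((n : ℝ) ^ r - (m : ℝ) ^ r))
    (hsub : Tendsto (fun k => u (k ^ 2) / ((k ^ 2 : ℕ) : ℝ) ^ r) atTop (𝓝 0)) :
    Tendsto (fun n => u n / (n : ℝ) ^ r) atTop (𝓝 0) := by
  have hρ := Nat.tendsto_sqrt_sq_div_self.pow r
  rw [one_pow] at hρ
  have hsquare := (hsub.comp Nat.tendsto_sqrt_atTop).mul hρ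
  rw [zero_mul] at hsquare
  have hrest : Tendsto (fun n => (u n - u (Nat.sqrt n ^ 2)) / (n : ℝ) ^ r) atTop (𝓝 0) := by
    have hlim := (hρ.const_sub 1).const_mul c
    rw [sub_self, mul_zero] at hlim
    refine squeeze_zero_norm' ?_ hlim
    filter_upwards [eventually_gt_atTop 0] with n hn
    have hn : (0 : ℝ) < (n : ℝ) ^ r := by positivity
    calc ‖(u n - u (Nat.sqrt n ^ 2)) / (n : ℝ) ^ r‖
        ≤ c * ((n : ℝ) ^ r - ((Nat.sqrt n ^ 2 : ℕ) : ℝ) ^ r) / (n : ℝ) ^ r := by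
          rw [Real.norm_eq_abs, abs_div, abs_of_pos hn]
          gcongr
          exact hu _ _ (Nat.sqrt_le' n)
      _ = c * (1 - (((Nat.sqrt n ^ 2 : ℕ) : ℝ) / n) ^ r) := by
          rw [div_pow]
          field_simp
  have hsum := hsquare.add hrest
  rw [add_zero] at hsum
  refine hsum.congr' ?_
  filter_upwards [eventually_gt_atTop 0] with n hn
  have hs : ((Nat.sqrt n ^ 2 : ℕ) : ℝ) ≠ 0 := by
    have : 0 < Nat.sqrt n := Nat.sqrt_pos.2 hn
    positivity
  have hn' : (n : ℝ) ≠ 0 := by positivity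
  simp only [comp_apply, div_pow]
  field_simp
  ring

lemma ae_tendsto_zero_of_summable_integral_sq {Ω : Type*} [MeasurableSpace Ω] {μ : Measure Ω}
    {V : ℕ → Ω → ℝ} (hV : ∀ k, AEMeasurable (V k) μ)
    (hint : ∀ k, Integrable (fun ω => V k ω ^ 2) μ)
    (hsum : Summable fun k => ∫ ω, V k ω ^ 2 ∂μ) :
    ∀ᵐ ω ∂μ, Tendsto (fun k => V k ω) atTop (𝓝 0) := by
  have hmeas : ∀ k, AEMeasurable (fun ω => ENNReal.ofReal (V k ω ^ 2)) μ :=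
    fun k => ((hV k).pow_const 2).ennreal_ofReal
  have hfin : ∫⁻ ω, ∑' k, ENNReal.ofReal (V k ω ^ 2) ∂μ ≠ ⊤ := by
    rw [lintegral_tsum hmeas]
    simp_rw [← ofReal_integral_eq_lintegral_ofReal (hint _) (ae_of_all _ fun _ => sq_nonneg _)]
    rw [← ENNReal.ofReal_tsum_of_nonneg (fun k => integral_nonneg fun _ => sq_nonneg _) hsum]
    exact ENNReal.ofReal_ne_top
  filter_upwards [ae_lt_top' (AEMeasurable.tsum hmeas) hfin] with ω hω
  have hsq : Summable fun k => V k ω ^ 2 := by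
    simpa [ENNReal.toReal_ofReal (sq_nonneg _)] using ENNReal.summable_toReal hω.ne
  rw [tendsto_zero_iff_abs_tendsto_zero]
  simpa [comp_def, Real.sqrt_sq_eq_abs] using hsq.tendsto_atTop_zero.sqrt

section Deterministic

variable {E : Type*} {r : ℕ} {g : (Fin r → E) → ℝ} {c : ℝ}

lemma abs_sum_distinct_sub_le (hc : ∀ v, |g v| ≤ c) (z : ℕ → E) {m n : ℕ} (hmn : m ≤ n) :
    |∑ t ∈ distinctTuplesBelow r n, g (fun a => z (t a))
        - ∑ t ∈ distinctTuplesBelow r m, g (fun a => z (t a))|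
      ≤ c * ((n : ℝ) ^ r - (m : ℝ) ^ r) := by
  have hc0 : 0 ≤ c := (abs_nonneg _).trans (hc fun _ => z 0)
  have hsub := distinctTuplesBelow_mono r hmn
  have hcard : #(distinctTuplesBelow r n \ distinctTuplesBelow r m) ≤ n ^ r - m ^ r := by
    calc _ ≤ #(tuplesBelow r n \ tuplesBelow r m) := card_le_card fun t ht => by
          simp only [Finset.mem_sdiff] at ht ⊢
          exact ⟨distinctTuplesBelow_subset r n ht.1,
            fun h => ht.2 (mem_filter.2 ⟨h, (mem_filter.1 ht.1).2⟩)⟩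
      _ = n ^ r - m ^ r := by
          rw [card_sdiff_of_subset (tuplesBelow_mono r hmn), card_tuplesBelow, card_tuplesBelow]
  have hcard' : (#(distinctTuplesBelow r n \ distinctTuplesBelow r m) : ℝ)
      ≤ (n : ℝ) ^ r - (m : ℝ) ^ r := by
    rw [← Nat.cast_pow, ← Nat.cast_pow, ← Nat.cast_sub (Nat.pow_le_pow_left hmn r)]
    exact_mod_cast hcard
  rw [← sum_sdiff hsub, add_sub_cancel_right, mul_comm]
  exact (abs_sum_le_card_mul _ fun t => hc _).trans (mul_le_mul_of_nonneg_right hcard' hc0)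

lemma tendsto_card_nondistinct_div (r : ℕ) :
    Tendsto (fun n => (#(tuplesBelow r n \ distinctTuplesBelow r n) : ℝ) / (n : ℝ) ^ r)
      atTop (𝓝 0) := by
  refine squeeze_zero' (Eventually.of_forall fun n => by positivity) ?_
    (tendsto_const_div_atTop_nhds_zero_nat ((r : ℝ) ^ 2))
  filter_upwards [eventually_gt_atTop 0] with n hn
  have hn : (0 : ℝ) < n := by exact_mod_cast hn
  calc (#(tuplesBelow r n \ distinctTuplesBelow r n) : ℝ) / (n : ℝ) ^ r
      ≤ (r : ℝ) ^ 2 * (n : ℝ) ^ (r - 1) / (n : ℝ) ^ r := by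
        gcongr
        exact_mod_cast card_tuplesBelow_sdiff_distinct_le r n
    _ = (r : ℝ) ^ 2 / n := by
        rw [div_eq_div_iff (by positivity) hn.ne', natCast_sq_mul_pow_sub_one_mul]

lemma tendsto_card_distinct_div (r : ℕ) :
    Tendsto (fun n => (#(distinctTuplesBelow r n) : ℝ) / (n : ℝ) ^ r) atTop (𝓝 1) := by
  have h := (tendsto_card_nondistinct_div r).const_sub 1
  rw [sub_zero] at h
  refine h.congr' ?_
  filter_upwards [eventually_gt_atTop 0] with n hn
  have hn : (n : ℝ) ^ r ≠ 0 := by positivity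
  rw [card_sdiff_of_subset (distinctTuplesBelow_subset r n), card_tuplesBelow, Nat.cast_sub
    ((card_le_card (distinctTuplesBelow_subset r n)).trans_eq (card_tuplesBelow r n))]
  field_simp
  push_cast
  ring

lemma tendsto_sum_nondistinct_div (hc : ∀ v, |g v| ≤ c) (z : ℕ → E) :
    Tendsto (fun n => (∑ t ∈ tuplesBelow r n \ distinctTuplesBelow r n, g (fun a => z (t a)))
      / (n : ℝ) ^ r) atTop (𝓝 0) := by
  have h := (tendsto_card_nondistinct_div r).mul_const c
  rw [zero_mul] at h
  refine squeeze_zero_norm (fun n => ?_) h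
  rw [Real.norm_eq_abs, abs_div, abs_of_nonneg (by positivity : (0 : ℝ) ≤ (n : ℝ) ^ r),
    div_mul_eq_mul_div]
  gcongr
  exact abs_sum_le_card_mul _ fun t => hc _

end Deterministic

def vStatistic {E : Type*} {r : ℕ} (g : (Fin r → E) → ℝ) (z : ℕ → E) (n : ℕ) : ℝ :=
  (∑ t ∈ tuplesBelow r n, g (fun a => z (t a))) / (n : ℝ) ^ r

section Independent

variable {Ω E : Type*} [MeasurableSpace Ω] [MeasurableSpace E] {P : Measure Ω}
  {Z : ℕ → Ω → E}

lemma map_comp_eq_pi [IsProbabilityMeasure P] (hZ : ∀ i, Measurable (Z i))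
    (hindep : iIndepFun Z P) (hid : ∀ i, IdentDistrib (Z i) (Z 0) P P)
    {r : ℕ} {t : Fin r → ℕ} (ht : Injective t) :
    P.map (fun ω a => Z (t a) ω) = Measure.pi fun _ => P.map (Z 0) := by
  rw [(hindep.precomp ht).map_fun_eq_pi_map fun a => (hZ (t a)).aemeasurable]
  simp only [(hid _).map_eq]

lemma integral_comp_eq_integral_pi [IsProbabilityMeasure P] (hZ : ∀ i, Measurable (Z i))
    (hindep : iIndepFun Z P) (hid : ∀ i, IdentDistrib (Z i) (Z 0) P P)
    {r : ℕ} {t : Fin r → ℕ} (ht : Injective t) {g : (Fin r → E) → ℝ} (hg : Measurable g) :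
    ∫ ω, g (fun a => Z (t a) ω) ∂P = ∫ v, g v ∂(Measure.pi fun _ => P.map (Z 0)) := by
  rw [← map_comp_eq_pi hZ hindep hid ht,
    integral_map (measurable_pi_lambda _ fun a => hZ (t a)).aemeasurable hg.aestronglyMeasurable]

lemma indepFun_comp_of_disjoint (hZ : ∀ i, Measurable (Z i)) (hindep : iIndepFun Z P)
    {r s : ℕ} {t : Fin r → ℕ} {t' : Fin s → ℕ} (h : Disjoint (univ.image t) (univ.image t')) :
    IndepFun (fun ω a => Z (t a) ω) (fun ω a => Z (t' a) ω) P :=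
  (hindep.indepFun_finset _ _ h hZ).comp
    (measurable_pi_lambda _ fun a => measurable_pi_apply ⟨t a, mem_image_of_mem t (mem_univ a)⟩)
    (measurable_pi_lambda _ fun a =>
      measurable_pi_apply ⟨t' a, mem_image_of_mem t' (mem_univ a)⟩)

end Independent

section StrongLaw

variable {Ω E : Type*} [MeasurableSpace Ω] [MeasurableSpace E] {P : Measure Ω}
  [IsProbabilityMeasure P] {Z : ℕ → Ω → E}

lemma integral_sq_sum_distinct_le (hZ : ∀ i, Measurable (Z i)) (hindep : iIndepFun Z P)
    (hid : ∀ i, IdentDistrib (Z i) (Z 0) P P) {r : ℕ} {g : (Fin r → E) → ℝ} (hg : Measurable g)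
    {c : ℝ} (hc : ∀ v, |g v| ≤ c) (hcenter : ∫ v, g v ∂(Measure.pi fun _ => P.map (Z 0)) = 0)
    (n : ℕ) :
    ∫ ω, (∑ t ∈ distinctTuplesBelow r n, g (fun a => Z (t a) ω)) ^ 2 ∂P
      ≤ c ^ 2 * ((r + r) ^ 2 * n ^ (r + r - 1) : ℕ) := by
  set D := distinctTuplesBelow r n
  set X : (Fin r → ℕ) → Ω → ℝ := fun t ω => g (fun a => Z (t a) ω)
  have hX : ∀ t, Measurable (X t) := fun t => hg.comp (measurable_pi_lambda _ fun a => hZ (t a))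
  have hXX : ∀ p : (Fin r → ℕ) × (Fin r → ℕ), ∀ ω, ‖X p.1 ω * X p.2 ω‖ ≤ c ^ 2 := fun p ω => by
    have h1 : |X p.1 ω| ≤ c := hc _
    rw [Real.norm_eq_abs, abs_mul, sq]
    exact mul_le_mul h1 (hc _) (abs_nonneg _) ((abs_nonneg _).trans h1)
  have hzero : ∀ p ∈ D ×ˢ D, Disjoint (univ.image p.1) (univ.image p.2) →
      ∫ ω, X p.1 ω * X p.2 ω ∂P = 0 := fun p hp hdisj => by
    have hinj : Injective p.1 := (mem_filter.1 (mem_product.1 hp).1).2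
    have hind : IndepFun (X p.1) (X p.2) P :=
      (indepFun_comp_of_disjoint hZ hindep hdisj).comp hg hg
    rw [hind.integral_fun_mul_eq_mul_integral (hX _).aestronglyMeasurable
      (hX _).aestronglyMeasurable, integral_comp_eq_integral_pi hZ hindep hid hinj hg, hcenter,
      zero_mul]
  calc ∫ ω, (∑ t ∈ D, X t ω) ^ 2 ∂P
      = ∑ p ∈ D ×ˢ D, ∫ ω, X p.1 ω * X p.2 ω ∂P := by
        simp_rw [sq, sum_mul_sum, ← sum_product']
        exact integral_finsetSum _ fun p _ =>
          Integrable.of_bound ((hX _).mul (hX _)).aestronglyMeasurable _ (ae_of_all _ (hXX p))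
    _ = ∑ p ∈ D ×ˢ D with ¬ Disjoint (univ.image p.1) (univ.image p.2),
          ∫ ω, X p.1 ω * X p.2 ω ∂P := by
        rw [sum_filter_of_ne]
        exact fun p hp h hdisj => h (hzero p hp hdisj)
    _ ≤ ∑ p ∈ D ×ˢ D with ¬ Disjoint (univ.image p.1) (univ.image p.2), c ^ 2 := by
        refine sum_le_sum fun p _ => (le_abs_self _).trans ?_
        simpa using norm_integral_le_of_norm_le_const (μ := P) (ae_of_all _ (hXX p))
    _ ≤ c ^ 2 * ((r + r) ^ 2 * n ^ (r + r - 1) : ℕ) := by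
        rw [sum_const, nsmul_eq_mul, mul_comm]
        gcongr
        exact card_filter_not_disjoint_le r n

lemma integral_sq_sum_distinct_div_le (hZ : ∀ i, Measurable (Z i)) (hindep : iIndepFun Z P)
    (hid : ∀ i, IdentDistrib (Z i) (Z 0) P P) {r : ℕ} {g : (Fin r → E) → ℝ} (hg : Measurable g)
    {c : ℝ} (hc : ∀ v, |g v| ≤ c) (hcenter : ∫ v, g v ∂(Measure.pi fun _ => P.map (Z 0)) = 0)
    {n : ℕ} (hn : 0 < n) :
    ∫ ω, ((∑ t ∈ distinctTuplesBelow r n, g (fun a => Z (t a) ω)) / (n : ℝ) ^ r) ^ 2 ∂P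
      ≤ c ^ 2 * (r + r) ^ 2 / n := by
  have hn : (0 : ℝ) < n := by exact_mod_cast hn
  simp_rw [div_pow, integral_div]
  calc (∫ ω, (∑ t ∈ distinctTuplesBelow r n, g (fun a => Z (t a) ω)) ^ 2 ∂P) / ((n : ℝ) ^ r) ^ 2
      ≤ c ^ 2 * ((r + r) ^ 2 * n ^ (r + r - 1) : ℕ) / ((n : ℝ) ^ r) ^ 2 := by
        gcongr
        exact integral_sq_sum_distinct_le hZ hindep hid hg hc hcenter n
    _ = c ^ 2 * (r + r) ^ 2 / n := by
        rw [div_eq_div_iff (by positivity) hn.ne']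
        have key := natCast_sq_mul_pow_sub_one_mul (r + r) (n : ℝ)
        push_cast at key ⊢
        linear_combination c ^ 2 * key

lemma ae_tendsto_sum_distinct_div_zero (hZ : ∀ i, Measurable (Z i)) (hindep : iIndepFun Z P)
    (hid : ∀ i, IdentDistrib (Z i) (Z 0) P P) {r : ℕ} {g : (Fin r → E) → ℝ} (hg : Measurable g)
    {c : ℝ} (hc : ∀ v, |g v| ≤ c) (hcenter : ∫ v, g v ∂(Measure.pi fun _ => P.map (Z 0)) = 0) :
    ∀ᵐ ω ∂P, Tendsto
      (fun n => (∑ t ∈ distinctTuplesBelow r n, g (fun a => Z (t a) ω)) / (n : ℝ) ^ r)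
      atTop (𝓝 0) := by
  set u : ℕ → Ω → ℝ := fun n ω => ∑ t ∈ distinctTuplesBelow r n, g (fun a => Z (t a) ω)
  have hu : ∀ n, MemLp (u n) 2 P := fun n => memLp_finsetSum _ fun t _ =>
    .of_bound (hg.comp (measurable_pi_lambda _ fun a => hZ (t a))).aestronglyMeasurable c
      (ae_of_all _ fun _ => (Real.norm_eq_abs _).trans_le (hc _))
  have hsum : Summable fun k : ℕ => c ^ 2 * (r + r) ^ 2 / (((k + 1) ^ 2 : ℕ) : ℝ) := by
    simp_rw [div_eq_mul_inv, Nat.cast_pow]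
    exact ((summable_nat_add_iff 1).2 (Real.summable_nat_pow_inv.2 one_lt_two)).mul_left _
  have hsquares : ∀ᵐ ω ∂P,
      Tendsto (fun k => u (k ^ 2) ω / ((k ^ 2 : ℕ) : ℝ) ^ r) atTop (𝓝 0) :=
    ae_tendsto_zero_of_summable_integral_sq
      (fun k => (hu _).aestronglyMeasurable.aemeasurable.div_const _)
      (fun k => by simpa only [div_eq_mul_inv] using ((hu _).mul_const _).integrable_sq)
      ((summable_nat_add_iff 1).1 (hsum.of_nonneg_of_le
        (fun _ => integral_nonneg fun _ => sq_nonneg _)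
        fun k => integral_sq_sum_distinct_div_le hZ hindep hid hg hc hcenter (by positivity)))
  filter_upwards [hsquares] with ω hω
  exact tendsto_div_pow_of_tendsto_sq_subseq
    (fun m n hmn => abs_sum_distinct_sub_le hc (fun i => Z i ω) hmn) hω

theorem ae_tendsto_vStatistic (hZ : ∀ i, Measurable (Z i)) (hindep : iIndepFun Z P)
    (hid : ∀ i, IdentDistrib (Z i) (Z 0) P P) {r : ℕ} {g : (Fin r → E) → ℝ} (hg : Measurable g)
    {C : ℝ} (hC : ∀ v, |g v| ≤ C) :
    ∀ᵐ ω ∂P, Tendsto (vStatistic g fun i => Z i ω) atTop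
      (𝓝 (∫ v, g v ∂(Measure.pi fun _ => P.map (Z 0)))) := by
  have : IsProbabilityMeasure (P.map (Z 0)) :=
    Measure.isProbabilityMeasure_map (hZ 0).aemeasurable
  set m := ∫ v, g v ∂(Measure.pi fun _ => P.map (Z 0))
  have hcenter : ∫ v, (g v - m) ∂(Measure.pi fun _ => P.map (Z 0)) = 0 := by
    rw [integral_sub (.of_bound hg.aestronglyMeasurable C (ae_of_all _ hC)) (integrable_const m),
      integral_const, probReal_univ, one_smul, sub_self]
  have hbound : ∀ v, |g v - m| ≤ C + |m| := fun v => (abs_sub _ _).trans (by linarith [hC v])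
  filter_upwards [ae_tendsto_sum_distinct_div_zero (g := fun v => g v - m) hZ hindep hid
    (hg.sub_const m) hbound hcenter] with ω hω
  have hlim := (hω.add ((tendsto_card_distinct_div r).const_mul m)).add
    (tendsto_sum_nondistinct_div hC fun i => Z i ω)
  rw [zero_add, mul_one, add_zero] at hlim
  refine hlim.congr fun n => ?_
  rw [vStatistic, ← sum_sdiff (distinctTuplesBelow_subset r n), sum_sub_distrib, sum_const,
    nsmul_eq_mul]
  ring

end StrongLaw

section FinitePi

variable {E : Type*} [MeasurableSpace E]

lemma integral_pi_zero (ν : Measure E) (G : (Fin 0 → E) → ℝ) :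
    ∫ v, G v ∂(Measure.pi fun _ => ν) = G ![] := by
  simp [Measure.pi_of_empty (x := ![])]

lemma integral_pi_succ (ν : Measure E) [SigmaFinite ν] {r : ℕ} {G : (Fin (r + 1) → E) → ℝ}
    (hG : Integrable G (Measure.pi fun _ => ν)) :
    ∫ v, G v ∂(Measure.pi fun _ => ν)
      = ∫ x, ∫ v, G (Fin.cons x v) ∂(Measure.pi fun _ => ν) ∂ν := by
  have e := measurePreserving_piFinSuccAbove (fun _ : Fin (r + 1) => ν) 0
  rw [← e.symm.integral_comp', integral_prod]
  · simp [MeasurableEquiv.piFinSuccAbove_symm_apply, Fin.insertNthEquiv, Fin.insertNth_zero']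
  · exact (e.symm.integrable_comp_emb (MeasurableEquiv.measurableEmbedding _)).2 hG

lemma measurable_finCons (r : ℕ) (x : E) :
    Measurable fun v : Fin r → E => (Fin.cons x v : Fin (r + 1) → E) :=
  measurable_pi_iff.2 fun a => by cases a using Fin.cases <;> simp [measurable_pi_apply]

variable {ν : Measure E} [IsFiniteMeasure ν] {C : ℝ}

lemma integral_pi_fin_two {G : (Fin 2 → E) → ℝ} (hG : Measurable G) (hC : ∀ v, |G v| ≤ C) :
    ∫ v, G v ∂(Measure.pi fun _ => ν) = ∫ x, ∫ y, G ![x, y] ∂ν ∂ν := by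
  rw [integral_pi_succ ν (.of_bound hG.aestronglyMeasurable C (ae_of_all _ hC))]
  refine integral_congr_ae (ae_of_all _ fun x => ?_)
  refine (integral_pi_succ ν (G := fun v : Fin 1 → E => G (Fin.cons x v))
    (.of_bound (hG.comp (measurable_finCons 1 x)).aestronglyMeasurable C
      (ae_of_all _ fun _ => hC _))).trans ?_
  simp only [integral_pi_zero]
  rfl

lemma integral_pi_fin_three {G : (Fin 3 → E) → ℝ} (hG : Measurable G) (hC : ∀ v, |G v| ≤ C) :
    ∫ v, G v ∂(Measure.pi fun _ => ν) = ∫ x, ∫ y, ∫ z, G ![x, y, z] ∂ν ∂ν ∂ν := by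
  rw [integral_pi_succ ν (.of_bound hG.aestronglyMeasurable C (ae_of_all _ hC))]
  refine integral_congr_ae (ae_of_all _ fun x => ?_)
  exact integral_pi_fin_two (hG.comp (measurable_finCons 2 x)) fun _ => hC _

end FinitePi

def kernelAt {α : Type*} {r : ℕ} (K : α → α → ℝ) (a b : Fin r) (v : Fin r → α) : ℝ :=
  K (v a) (v b)

section Kernels

variable {α β : Type*}

lemma measurable_uncurry_onFun [MeasurableSpace α] [MeasurableSpace β] {K : β → β → ℝ}
    (hK : Measurable (uncurry K)) {f : α → β} (hf : Measurable f) :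
    Measurable (uncurry (K on f)) :=
  hK.comp ((hf.comp measurable_fst).prodMk (hf.comp measurable_snd))

lemma measurable_kernelAt [MeasurableSpace α] {K : α → α → ℝ} (hK : Measurable (uncurry K))
    {r : ℕ} (a b : Fin r) : Measurable (kernelAt K a b) :=
  show Measurable fun v : Fin r → α => uncurry K (v a, v b) from
    hK.comp ((measurable_pi_apply a).prodMk (measurable_pi_apply b))

lemma measurable_kernelAt_mul [MeasurableSpace α] {K L : α → α → ℝ}
    (hK : Measurable (uncurry K)) (hL : Measurable (uncurry L)) {r : ℕ} (a b c d : Fin r) :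
    Measurable fun v => kernelAt K a b v * kernelAt L c d v :=
  (measurable_kernelAt hK a b).mul (measurable_kernelAt hL c d)

lemma abs_kernelAt_mul_le {K L : α → α → ℝ} {C D : ℝ} (hK : ∀ x y, |K x y| ≤ C)
    (hL : ∀ x y, |L x y| ≤ D) {r : ℕ} (a b c d : Fin r) (v : Fin r → α) :
    |kernelAt K a b v * kernelAt L c d v| ≤ |C| * |D| := by
  rw [abs_mul]
  exact mul_le_mul ((hK _ _).trans (le_abs_self _)) ((hL _ _).trans (le_abs_self _))
    (abs_nonneg _) (abs_nonneg _)

lemma Vstat_eq_vStatistic (K1 : α → α → ℝ) (K2 : β → β → ℝ) (x : ℕ → α) (y : ℕ → β) (n : ℕ) :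
    Vstat K1 K2 n (fun i : Fin n => x i) (fun i : Fin n => y i)
      = vStatistic (fun v : Fin 2 → α × β => kernelAt (K1 on Prod.fst) 0 1 v
            * kernelAt (K2 on Prod.snd) 0 1 v) (fun i => (x i, y i)) n
        + vStatistic (kernelAt (K1 on Prod.fst) (0 : Fin 2) 1) (fun i => (x i, y i)) n
          * vStatistic (kernelAt (K2 on Prod.snd) (0 : Fin 2) 1) (fun i => (x i, y i)) n
        - 2 * vStatistic (fun v : Fin 3 → α × β => kernelAt (K1 on Prod.fst) 0 1 v
            * kernelAt (K2 on Prod.snd) 0 2 v) (fun i => (x i, y i)) n := by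
  simp only [Vstat, vStatistic, sum_tuplesBelow_succ, sum_tuplesBelow_zero, Finset.sum_range]
  simp [kernelAt, onFun]
  ring

lemma dCov2_eq_integral_pi [MeasurableSpace α] [MeasurableSpace β] {K1 : α → α → ℝ}
    {K2 : β → β → ℝ} (hK1 : Measurable (uncurry K1)) (hK2 : Measurable (uncurry K2))
    {C1 C2 : ℝ} (hC1 : ∀ x y, |K1 x y| ≤ C1) (hC2 : ∀ x y, |K2 x y| ≤ C2)
    (μ : Measure (α × β)) [IsFiniteMeasure μ] :
    dCov2 K1 K2 μ
      = ∫ v : Fin 2 → α × β, kernelAt (K1 on Prod.fst) 0 1 v * kernelAt (K2 on Prod.snd) 0 1 v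
          ∂(Measure.pi fun _ => μ)
        + (∫ v, kernelAt (K1 on Prod.fst) (0 : Fin 2) 1 v ∂(Measure.pi fun _ => μ))
          * ∫ v, kernelAt (K2 on Prod.snd) (0 : Fin 2) 1 v ∂(Measure.pi fun _ => μ)
        - 2 * ∫ v : Fin 3 → α × β,
            kernelAt (K1 on Prod.fst) 0 1 v * kernelAt (K2 on Prod.snd) 0 2 v
          ∂(Measure.pi fun _ => μ) := by
  have h1 := measurable_uncurry_onFun hK1 (measurable_fst (β := β))
  have h2 := measurable_uncurry_onFun hK2 (measurable_snd (α := α))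
  rw [integral_pi_fin_two (measurable_kernelAt_mul h1 h2 0 1 0 1)
      (abs_kernelAt_mul_le (fun _ _ => hC1 _ _) (fun _ _ => hC2 _ _) 0 1 0 1),
    integral_pi_fin_two (measurable_kernelAt h1 0 1) (fun _ => hC1 _ _),
    integral_pi_fin_two (measurable_kernelAt h2 0 1) (fun _ => hC2 _ _),
    integral_pi_fin_three (measurable_kernelAt_mul h1 h2 0 1 0 2)
      (abs_kernelAt_mul_le (fun _ _ => hC1 _ _) (fun _ _ => hC2 _ _) 0 1 0 2)]
  rfl

theorem ae_tendsto_Vstat_dCov2 [MeasurableSpace α] [MeasurableSpace β] {K1 : α → α → ℝ}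
    {K2 : β → β → ℝ} (hK1 : Measurable (uncurry K1)) (hK2 : Measurable (uncurry K2))
    {C1 C2 : ℝ} (hC1 : ∀ x y, |K1 x y| ≤ C1) (hC2 : ∀ x y, |K2 x y| ≤ C2)
    {Ω : Type*} [MeasurableSpace Ω] {P : Measure Ω} [IsProbabilityMeasure P]
    {X : ℕ → Ω → α} {Y : ℕ → Ω → β} (hX : ∀ i, Measurable (X i)) (hY : ∀ i, Measurable (Y i))
    (hindep : iIndepFun (fun i ω => (X i ω, Y i ω)) P)
    (hid : ∀ i, IdentDistrib (fun ω => (X i ω, Y i ω)) (fun ω => (X 0 ω, Y 0 ω)) P P) :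
    ∀ᵐ ω ∂P, Tendsto (fun n => Vstat K1 K2 n (fun i : Fin n => X i ω) (fun i : Fin n => Y i ω))
      atTop (𝓝 (dCov2 K1 K2 (P.map fun ω => (X 0 ω, Y 0 ω)))) := by
  have hZ : ∀ i, Measurable fun ω => (X i ω, Y i ω) := fun i => (hX i).prodMk (hY i)
  have : IsProbabilityMeasure (P.map fun ω => (X 0 ω, Y 0 ω)) :=
    Measure.isProbabilityMeasure_map (hZ 0).aemeasurable
  have h1 := measurable_uncurry_onFun hK1 (measurable_fst (β := β))
  have h2 := measurable_uncurry_onFun hK2 (measurable_snd (α := α))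
  have hb1 : ∀ x y : α × β, |(K1 on Prod.fst) x y| ≤ C1 := fun _ _ => hC1 _ _
  have hb2 : ∀ x y : α × β, |(K2 on Prod.snd) x y| ≤ C2 := fun _ _ => hC2 _ _
  filter_upwards [
    ae_tendsto_vStatistic hZ hindep hid (measurable_kernelAt_mul h1 h2 0 1 0 1)
      (abs_kernelAt_mul_le hb1 hb2 (0 : Fin 2) 1 0 1),
    ae_tendsto_vStatistic hZ hindep hid (measurable_kernelAt h1 (0 : Fin 2) 1) (fun _ => hb1 _ _),
    ae_tendsto_vStatistic hZ hindep hid (measurable_kernelAt h2 (0 : Fin 2) 1) (fun _ => hb2 _ _),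
    ae_tendsto_vStatistic hZ hindep hid (measurable_kernelAt_mul h1 h2 0 1 0 2)
      (abs_kernelAt_mul_le hb1 hb2 (0 : Fin 3) 1 0 2)] with ω hprod hfst hsnd hcross
  rw [dCov2_eq_integral_pi hK1 hK2 hC1 hC2]
  simp_rw [Vstat_eq_vStatistic K1 K2 (fun i => X i ω) (fun i => Y i ω)]
  exact (hprod.add (hfst.mul hsnd)).sub (hcross.const_mul 2)

end Kernels

theorem Vstat_tendsto_dCov2_general
    (d1 d2 : ℕ)
    (K1 : UnitSphere d1 → UnitSphere d1 → ℝ) (K2 : UnitSphere d2 → UnitSphere d2 → ℝ)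
    (hK1meas : Measurable (Function.uncurry K1)) (hK2meas : Measurable (Function.uncurry K2))
    (hK1bdd : ∃ C, ∀ x y, |K1 x y| ≤ C) (hK2bdd : ∃ C, ∀ x y, |K2 x y| ≤ C)
    {Ω : Type*} [MeasurableSpace Ω] (P : Measure Ω) [IsProbabilityMeasure P]
    (X : ℕ → Ω → UnitSphere d1) (Y : ℕ → Ω → UnitSphere d2)
    (hXmeas : ∀ i, Measurable (X i)) (hYmeas : ∀ i, Measurable (Y i))
    (hindep : iIndepFun (fun i ω => (X i ω, Y i ω)) P)
    (hid : ∀ i, IdentDistrib (fun ω => (X i ω, Y i ω)) (fun ω => (X 0 ω, Y 0 ω)) P P) :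
    ∀ᵐ ω ∂P,
      Tendsto (fun n : ℕ => Vstat K1 K2 n (fun i : Fin n => X i ω) (fun i : Fin n => Y i ω))
        atTop
        (nhds (dCov2 K1 K2 (Measure.map (fun ω => (X 0 ω, Y 0 ω)) P))) := by
  obtain ⟨C1, hC1⟩ := hK1bdd
  obtain ⟨C2, hC2⟩ := hK2bdd
  exact ae_tendsto_Vstat_dCov2 hK1meas hK2meas hC1 hC2 hXmeas hYmeas hindep hid

/-- For i.i.d. random elements `(X_i,Y_i)` of `S^{d1} × S^{d2}` and bounded measurable
symmetric kernels, the empirical distance covariance `V_{n,X,Y}` converges almost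
surely to the population distance covariance `dCov²_K(X,Y)`. -/
theorem Vstat_tendsto_dCov2
    (d1 d2 : ℕ) (hd1 : 1 ≤ d1) (hd2 : 1 ≤ d2)
    (K1 : UnitSphere d1 → UnitSphere d1 → ℝ) (K2 : UnitSphere d2 → UnitSphere d2 → ℝ)
    (hK1meas : Measurable (Function.uncurry K1)) (hK2meas : Measurable (Function.uncurry K2))
    (hK1bdd : ∃ C, ∀ x y, |K1 x y| ≤ C) (hK2bdd : ∃ C, ∀ x y, |K2 x y| ≤ C)
    (hK1symm : ∀ x y, K1 x y = K1 y x) (hK2symm : ∀ x y, K2 x y = K2 y x)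
    {Ω : Type*} [MeasurableSpace Ω] (P : Measure Ω) [IsProbabilityMeasure P]
    (X : ℕ → Ω → UnitSphere d1) (Y : ℕ → Ω → UnitSphere d2)
    (hXmeas : ∀ i, Measurable (X i)) (hYmeas : ∀ i, Measurable (Y i))
    (hindep : iIndepFun (fun i ω => (X i ω, Y i ω)) P)
    (hid : ∀ i, IdentDistrib (fun ω => (X i ω, Y i ω)) (fun ω => (X 0 ω, Y 0 ω)) P P) :
    ∀ᵐ ω ∂P,
      Tendsto (fun n : ℕ => Vstat K1 K2 n (fun i : Fin n => X i ω) (fun i : Fin n => Y i ω))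
        atTop
        (nhds (dCov2 K1 K2 (Measure.map (fun ω => (X 0 ω, Y 0 ω)) P))) :=
  Vstat_tendsto_dCov2_general d1 d2 K1 K2 hK1meas hK2meas hK1bdd hK2bdd P X Y hXmeas hYmeas hindep
    hid
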